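/- For every integer n ≥ 3, the matrix Q_n = P_{S,n}⁻¹ s(A_n) is symmetric and orthogonal, i.e. Q_nᵀ = Q_n and Q_n² = I_{2mn}, and rank(P_{S,n}⁻¹A_n − Q_n) ≤ 8m; in particular P_{S,n}⁻¹A_n = Q_n + R_n with Q_n real symmetric orthogonal and rank(R_n) ≤ 8m. -/

import Mathlib

open Matrix Filter MeasureTheory
open scoped Matrix.Norms.L2Operator

noncomputable section

/- `Tmat m n L` : the block lower-triangular banded block-Toeplitz matrix
`T_n ∈ ℝ^{mn×mn}`, with `n×n` blocks each of size `m×m`, whose `(i,j)`-th block equals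
`L` if `i = j`, `-2·I_m` if `i = j+1`, `L` if `i = j+2`, and `0` otherwise. -/
def Tmat (m n : ℕ) (L : Matrix (Fin m) (Fin m) ℝ) :
    Matrix (Fin n × Fin m) (Fin n × Fin m) ℝ := fun p q =>
  if (p.1 : ℕ) = (q.1 : ℕ) then L p.2 q.2
  else if (p.1 : ℕ) = (q.1 : ℕ) + 1 then (if p.2 = q.2 then (-2 : ℝ) else 0)
  else if (p.1 : ℕ) = (q.1 : ℕ) + 2 then L p.2 q.2
  else 0

/- `Ǐ_n ⊗ I_m` with `Ǐ_n = diag(1,…,1,1/2)`. -/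
def checkI (m n : ℕ) : Matrix (Fin n × Fin m) (Fin n × Fin m) ℝ :=
  Matrix.diagonal fun p => if (p.1 : ℕ) = n - 1 then (1 / 2 : ℝ) else 1

/- `Î_n ⊗ I_m` with `Î_n = diag(1/2,1,…,1)`. -/
def hatI (m n : ℕ) : Matrix (Fin n × Fin m) (Fin n × Fin m) ℝ :=
  Matrix.diagonal fun p => if (p.1 : ℕ) = 0 then (1 / 2 : ℝ) else 1

/- `A_n = [[α(Ǐ_n⊗I_m), T_nᵀ],[T_n, −α(Î_n⊗I_m)]] ∈ ℝ^{2mn×2mn}`. -/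
def Amat (m n : ℕ) (α : ℝ) (L : Matrix (Fin m) (Fin m) ℝ) :
    Matrix ((Fin n × Fin m) ⊕ (Fin n × Fin m)) ((Fin n × Fin m) ⊕ (Fin n × Fin m)) ℝ :=
  Matrix.fromBlocks (α • checkI m n) (Tmat m n L)ᵀ (Tmat m n L) (-(α • hatI m n))

/- the unique symmetric positive semidefinite square root of a positive semidefinite
real matrix (junk value `0` if the matrix is not positive semidefinite). -/
open scoped Classical in
def matSqrt {k : Type*} [Fintype k] [DecidableEq k] (M : Matrix k k ℝ) : Matrix k k ℝ :=
  if h : M.PosSemidef then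
    (h.1.eigenvectorUnitary : Matrix k k ℝ) * Matrix.diagonal (Real.sqrt ∘ h.1.eigenvalues) *
      (star h.1.eigenvectorUnitary : Matrix k k ℝ)
  else 0

/- `S_n` : the Strang block-circulant approximation of `T_n`: the `(i,j)`-th `m×m` block
equals `L` if `i ≡ j (mod n)`, `−2·I_m` if `i − j ≡ 1 (mod n)`, `L` if `i − j ≡ 2 (mod n)`,
and `0` otherwise. -/
def Smat (m n : ℕ) (L : Matrix (Fin m) (Fin m) ℝ) :
    Matrix (Fin n × Fin m) (Fin n × Fin m) ℝ := fun p q =>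
  if ((p.1 : ℕ) + n - (q.1 : ℕ)) % n = 0 then L p.2 q.2
  else if ((p.1 : ℕ) + n - (q.1 : ℕ)) % n = 1 then (if p.2 = q.2 then (-2 : ℝ) else 0)
  else if ((p.1 : ℕ) + n - (q.1 : ℕ)) % n = 2 then L p.2 q.2
  else 0

/- `s(A_n) = [[α·I_{mn}, S_nᵀ],[S_n, −α·I_{mn}]]`. -/
def sAmat (m n : ℕ) (α : ℝ) (L : Matrix (Fin m) (Fin m) ℝ) :
    Matrix ((Fin n × Fin m) ⊕ (Fin n × Fin m)) ((Fin n × Fin m) ⊕ (Fin n × Fin m)) ℝ :=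
  Matrix.fromBlocks (α • 1) (Smat m n L)ᵀ (Smat m n L) (-(α • 1))

/- `P_{S,n} = blockdiag((S_nᵀS_n + α²I)^{1/2}, (S_nS_nᵀ + α²I)^{1/2})`. -/
def PS (m n : ℕ) (α : ℝ) (L : Matrix (Fin m) (Fin m) ℝ) :
    Matrix ((Fin n × Fin m) ⊕ (Fin n × Fin m)) ((Fin n × Fin m) ⊕ (Fin n × Fin m)) ℝ :=
  Matrix.fromBlocks (matSqrt ((Smat m n L)ᵀ * Smat m n L + (α ^ 2) • 1)) 0 0
    (matSqrt (Smat m n L * (Smat m n L)ᵀ + (α ^ 2) • 1))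

/-! ### Auxiliary lemmas -/

namespace Matrix.PosSemidef

def sqrt {k : Type*} [Fintype k] [DecidableEq k] {M : Matrix k k ℝ} (h : M.PosSemidef) :
    Matrix k k ℝ :=
  (h.1.eigenvectorUnitary : Matrix k k ℝ) * Matrix.diagonal (Real.sqrt ∘ h.1.eigenvalues) *
    (star h.1.eigenvectorUnitary : Matrix k k ℝ)

open scoped MatrixOrder in
lemma sqrt_eq_cfc {k : Type*} [Fintype k] [DecidableEq k] {M : Matrix k k ℝ}
    (h : M.PosSemidef) : h.sqrt = CFC.sqrt M := by
  rw [CFC.sqrt_eq_cfc, cfc_nnreal_eq_real _ M h.nonneg, h.1.cfc_eq, Matrix.IsHermitian.cfc, Unitary.conjStarAlgAut_apply]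
  have hf : (RCLike.ofReal ∘ (fun x : ℝ => ((NNReal.sqrt x.toNNReal : NNReal) : ℝ)) ∘
      h.1.eigenvalues) = Real.sqrt ∘ h.1.eigenvalues := by
    funext i
    simp only [Function.comp_apply, Real.coe_sqrt, Real.coe_toNNReal', RCLike.ofReal_real_eq_id, id]
    rw [max_eq_left (h.eigenvalues_nonneg i)]
  rw [hf]; rfl

open scoped MatrixOrder in
lemma posSemidef_sqrt {k : Type*} [Fintype k] [DecidableEq k] {M : Matrix k k ℝ}
    (h : M.PosSemidef) : h.sqrt.PosSemidef := by
  rw [sqrt_eq_cfc]; exact Matrix.nonneg_iff_posSemidef.mp (CFC.sqrt_nonneg M)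

open scoped MatrixOrder in
lemma sqrt_mul_self {k : Type*} [Fintype k] [DecidableEq k] {M : Matrix k k ℝ}
    (h : M.PosSemidef) : h.sqrt * h.sqrt = M := by
  rw [sqrt_eq_cfc]; exact CFC.sqrt_mul_sqrt_self M h.nonneg

open scoped MatrixOrder in
lemma eq_of_sq_eq_sq {k : Type*} [Fintype k] [DecidableEq k] {A B : Matrix k k ℝ}
    (hA : A.PosSemidef) (hB : B.PosSemidef) (h : A ^ 2 = B ^ 2) : A = B := by
  rw [← CFC.sqrt_sq A hA.nonneg, h, CFC.sqrt_sq B hB.nonneg]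

end Matrix.PosSemidef

lemma ctr_eq {k l : Type*} (A : Matrix k l ℝ) : Aᴴ = Aᵀ := by
  ext i j; simp [Matrix.conjTranspose_apply]

lemma posDef_fromBlocksDiag {k : Type*} [Fintype k] [DecidableEq k]
    {A D : Matrix k k ℝ} (hA : A.PosDef) (hD : D.PosDef) :
    (Matrix.fromBlocks A 0 0 D).PosDef := by
  refine Matrix.posDef_iff_dotProduct_mulVec.mpr ⟨?_, ?_⟩
  · show _ = _
    rw [Matrix.fromBlocks_conjTranspose, hA.1.eq, hD.1.eq, Matrix.conjTranspose_zero]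
  · intro x hx
    have hxe : x = Sum.elim (x ∘ Sum.inl) (x ∘ Sum.inr) := (Sum.elim_comp_inl_inr x).symm
    rw [hxe, Matrix.fromBlocks_mulVec]
    have hst : star (Sum.elim (x ∘ Sum.inl) (x ∘ Sum.inr))
        = Sum.elim (star (x ∘ Sum.inl)) (star (x ∘ Sum.inr)) := by
      funext i; cases i <;> rfl
    rw [hst]
    simp only [Matrix.zero_mulVec, add_zero, zero_add, sumElim_dotProduct_sumElim]
    by_cases h1 : x ∘ Sum.inl = 0
    · have h2 : x ∘ Sum.inr ≠ 0 := by
        intro h2; apply hx; rw [hxe, h1, h2]; funext i; cases i <;> rfl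
      exact add_pos_of_nonneg_of_pos (hA.posSemidef.dotProduct_mulVec_nonneg _) (hD.dotProduct_mulVec_pos h2)
    · exact add_pos_of_pos_of_nonneg (hA.dotProduct_mulVec_pos h1) (hD.posSemidef.dotProduct_mulVec_nonneg _)

lemma posDef_sqrt {k : Type*} [Fintype k] [DecidableEq k]
    {M : Matrix k k ℝ} (hM : M.PosDef) : (hM.posSemidef.sqrt).PosDef := by
  refine Matrix.posDef_iff_dotProduct_mulVec.mpr ⟨hM.posSemidef.posSemidef_sqrt.1, fun x hx => ?_⟩
  rcases lt_or_eq_of_le (hM.posSemidef.posSemidef_sqrt.dotProduct_mulVec_nonneg x) with h | h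
  · exact h
  · exfalso
    have h0 : hM.posSemidef.sqrt *ᵥ x = 0 :=
      (hM.posSemidef.posSemidef_sqrt.dotProduct_mulVec_zero_iff x).mp h.symm
    have hMx : M *ᵥ x = 0 := by
      rw [← hM.posSemidef.sqrt_mul_self, ← Matrix.mulVec_mulVec, h0, Matrix.mulVec_zero]
    have := hM.dotProduct_mulVec_pos hx
    rw [hMx, dotProduct_zero] at this
    exact lt_irrefl 0 this

lemma modaux (a b N : ℕ) (ha : a < N) (hb : b < N) :
    (a + N - b) % N = if b ≤ a then a - b else a + N - b := by
  split_ifs with h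
  · have h2 : a + N - b = (a - b) + N := by omega
    rw [h2, Nat.add_mod_right, Nat.mod_eq_of_lt (by omega)]
  · exact Nat.mod_eq_of_lt (by omega)

lemma TS_eq (m n : ℕ) (hn : 3 ≤ n) (L : Matrix (Fin m) (Fin m) ℝ)
    (p q : Fin n × Fin m) (h : (q.1 : ℕ) + 3 ≤ n ∨ 2 ≤ (p.1 : ℕ)) :
    Tmat m n L p q = Smat m n L p q := by
  have hp := p.1.isLt
  have hq := q.1.isLt
  unfold Tmat Smat
  rw [modaux _ _ _ hp hq]
  split_ifs <;> first | rfl | omega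

/- `Q_n = P_{S,n}⁻¹ s(A_n)` is real symmetric and orthogonal and
`rank(P_{S,n}⁻¹A_n − Q_n) ≤ 8m`. -/
theorem stmt_8 (m n : ℕ) (hm : 1 ≤ m) (hn : 3 ≤ n) (α : ℝ) (hα : 0 < α)
    (L : Matrix (Fin m) (Fin m) ℝ) (hL : L.PosDef) :
    ((PS m n α L)⁻¹ * sAmat m n α L)ᵀ = (PS m n α L)⁻¹ * sAmat m n α L ∧
    ((PS m n α L)⁻¹ * sAmat m n α L) * ((PS m n α L)⁻¹ * sAmat m n α L) = 1 ∧
    ((PS m n α L)⁻¹ * Amat m n α L - (PS m n α L)⁻¹ * sAmat m n α L).rank ≤ 8 * m := by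
  classical
  set S : Matrix (Fin n × Fin m) (Fin n × Fin m) ℝ := Smat m n L with hSdef
  -- positive definiteness of the two diagonal blocks
  have hsm : ((α ^ 2) • (1 : Matrix (Fin n × Fin m) (Fin n × Fin m) ℝ)).PosDef := by
    rw [Matrix.smul_one_eq_diagonal]
    exact Matrix.posDef_diagonal_iff.mpr fun _ => by positivity
  have hM₁ : (Sᵀ * S + (α ^ 2) • (1 : Matrix (Fin n × Fin m) (Fin n × Fin m) ℝ)).PosDef := by
    have h := Matrix.posSemidef_conjTranspose_mul_self S
    rw [ctr_eq] at h
    exact Matrix.PosDef.posSemidef_add h hsm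
  have hM₂ : (S * Sᵀ + (α ^ 2) • (1 : Matrix (Fin n × Fin m) (Fin n × Fin m) ℝ)).PosDef := by
    have h := Matrix.posSemidef_self_mul_conjTranspose S
    rw [ctr_eq] at h
    exact Matrix.PosDef.posSemidef_add h hsm
  have hPdef : PS m n α L
      = Matrix.fromBlocks hM₁.posSemidef.sqrt 0 0 hM₂.posSemidef.sqrt := by
    unfold PS matSqrt
    rw [dif_pos hM₁.posSemidef, dif_pos hM₂.posSemidef]
    rfl
  set P : Matrix ((Fin n × Fin m) ⊕ (Fin n × Fin m)) ((Fin n × Fin m) ⊕ (Fin n × Fin m)) ℝ :=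
    PS m n α L with hP
  set sA : Matrix ((Fin n × Fin m) ⊕ (Fin n × Fin m)) ((Fin n × Fin m) ⊕ (Fin n × Fin m)) ℝ :=
    sAmat m n α L with hsA
  have hPsym : Pᵀ = P := by
    rw [hPdef, ← ctr_eq, Matrix.fromBlocks_conjTranspose,
      hM₁.posSemidef.posSemidef_sqrt.1.eq, hM₂.posSemidef.posSemidef_sqrt.1.eq,
      Matrix.conjTranspose_zero]
  have hPpd : P.PosDef := by
    rw [hPdef]; exact posDef_fromBlocksDiag (posDef_sqrt hM₁) (posDef_sqrt hM₂)
  have hdet : IsUnit P.det := hPpd.det_pos.ne'.isUnit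
  have hsAsym : sAᵀ = sA := by
    rw [hsA]
    unfold sAmat
    rw [Matrix.fromBlocks_transpose]
    simp [Matrix.transpose_smul]
  have hPP : P * P = sA * sA := by
    rw [hPdef, hsA]
    unfold sAmat
    rw [Matrix.fromBlocks_multiply, Matrix.fromBlocks_multiply]
    rw [hM₁.posSemidef.sqrt_mul_self, hM₂.posSemidef.sqrt_mul_self]
    congr 1 <;>
      simp [Matrix.smul_mul, Matrix.mul_smul, smul_smul, ← sq, add_comm, smul_pow, hSdef]
  have hXpsd : (sA * P⁻¹ * sA).PosSemidef := by
    have h := hPpd.inv.posSemidef.conjTranspose_mul_mul_same sA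
    rwa [ctr_eq, hsAsym] at h
  have hXsq : (sA * P⁻¹ * sA) ^ 2 = P ^ 2 := by
    rw [pow_two, pow_two]
    calc sA * P⁻¹ * sA * (sA * P⁻¹ * sA)
        = sA * (P⁻¹ * ((sA * sA) * (P⁻¹ * sA))) := by simp only [Matrix.mul_assoc]
      _ = sA * (P⁻¹ * ((P * P) * (P⁻¹ * sA))) := by rw [hPP]
      _ = sA * sA := by
          rw [Matrix.mul_assoc P P, Matrix.mul_nonsing_inv_cancel_left _ _ hdet,
            Matrix.nonsing_inv_mul_cancel_left _ _ hdet]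
      _ = P * P := hPP.symm
  have hXP : sA * P⁻¹ * sA = P := hXpsd.eq_of_sq_eq_sq hPpd.posSemidef hXsq
  have hQQ : (P⁻¹ * sA) * (P⁻¹ * sA) = 1 := by
    calc (P⁻¹ * sA) * (P⁻¹ * sA) = P⁻¹ * (sA * P⁻¹ * sA) := by simp only [Matrix.mul_assoc]
      _ = P⁻¹ * P := by rw [hXP]
      _ = 1 := Matrix.nonsing_inv_mul _ hdet
  have hQt : (P⁻¹ * sA)ᵀ = P⁻¹ * sA := by
    have hPinvT : (P⁻¹)ᵀ = P⁻¹ := by rw [Matrix.transpose_nonsing_inv, hPsym]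
    have hQQt : (P⁻¹ * sA) * (P⁻¹ * sA)ᵀ = 1 := by
      rw [Matrix.transpose_mul, hsAsym, hPinvT]
      calc (P⁻¹ * sA) * (sA * P⁻¹) = P⁻¹ * ((sA * sA) * P⁻¹) := by simp only [Matrix.mul_assoc]
        _ = P⁻¹ * ((P * P) * P⁻¹) := by rw [hPP]
        _ = P⁻¹ * (P * (P * P⁻¹)) := by simp only [Matrix.mul_assoc]
        _ = 1 := by
            rw [Matrix.mul_nonsing_inv _ hdet, Matrix.mul_one, Matrix.nonsing_inv_mul _ hdet]
    have h1 : (P⁻¹ * sA)⁻¹ = (P⁻¹ * sA)ᵀ := Matrix.inv_eq_right_inv hQQt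
    have h2 : (P⁻¹ * sA)⁻¹ = P⁻¹ * sA := Matrix.inv_eq_right_inv hQQ
    rw [← h1, h2]
  refine ⟨hQt, hQQ, ?_⟩
  -- the rank estimate
  rw [← Matrix.mul_sub]
  refine le_trans (Matrix.rank_mul_le_right _ _) ?_
  set w : ((Fin n × Fin m) ⊕ (Fin n × Fin m)) → ℝ :=
    Sum.elim (fun p => if (p.1 : ℕ) + 3 ≤ n then 0 else 1)
      (fun p => if 2 ≤ (p.1 : ℕ) then 0 else 1) with hw
  have hED : Matrix.diagonal w * (Amat m n α L - sA) = Amat m n α L - sA := by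
    ext x q
    rw [Matrix.diagonal_mul]
    rcases x with p | p
    · by_cases hc : (p.1 : ℕ) + 3 ≤ n
      · have hw0 : w (Sum.inl p) = 0 := by simp [hw, hc]
        rw [hw0, zero_mul]
        rcases q with r | r
        · rw [hsA]
          simp only [Amat, sAmat, Matrix.sub_apply, Matrix.fromBlocks_apply₁₁,
            Matrix.smul_apply, checkI, Matrix.diagonal_apply, Matrix.one_apply, smul_eq_mul]
          split_ifs <;> first | (exfalso; omega) | ring
        · rw [hsA]
          simp only [Amat, sAmat, Matrix.sub_apply, Matrix.fromBlocks_apply₁₂,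
            Matrix.transpose_apply]
          rw [TS_eq m n hn L r p (Or.inl hc), sub_self]
      · have hw1 : w (Sum.inl p) = 1 := by simp [hw, hc]
        rw [hw1, one_mul]
    · by_cases hc : 2 ≤ (p.1 : ℕ)
      · have hw0 : w (Sum.inr p) = 0 := by simp [hw, hc]
        rw [hw0, zero_mul]
        rcases q with r | r
        · rw [hsA]
          simp only [Amat, sAmat, Matrix.sub_apply, Matrix.fromBlocks_apply₂₁]
          rw [TS_eq m n hn L p r (Or.inr hc), sub_self]
        · rw [hsA]
          simp only [Amat, sAmat, Matrix.sub_apply, Matrix.fromBlocks_apply₂₂,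
            Matrix.neg_apply, Matrix.smul_apply, hatI, Matrix.diagonal_apply,
            Matrix.one_apply, smul_eq_mul]
          split_ifs <;> first | (exfalso; omega) | ring
      · have hw1 : w (Sum.inr p) = 1 := by simp [hw, hc]
        rw [hw1, one_mul]
  calc (Amat m n α L - sA).rank = (Matrix.diagonal w * (Amat m n α L - sA)).rank := by rw [hED]
    _ ≤ (Matrix.diagonal w).rank := Matrix.rank_mul_le_left _ _
    _ = Fintype.card {i // w i ≠ 0} := Matrix.rank_diagonal w
    _ ≤ 8 * m := by
        have hinj : Function.Injective (fun x : {i // w i ≠ 0} =>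
            Sum.elim
              (fun p : Fin n × Fin m => ((if (p.1 : ℕ) = n - 1 then (0 : Fin 4) else 1), p.2))
              (fun p : Fin n × Fin m => ((if (p.1 : ℕ) = 0 then (2 : Fin 4) else 3), p.2))
              x.1) := by
          rintro ⟨x, hx⟩ ⟨y, hy⟩ h
          apply Subtype.ext
          rcases x with p | p <;> rcases y with r | r <;>
            simp only [hw, Sum.elim_inl, Sum.elim_inr, Prod.mk.injEq] at hx hy h <;>
            obtain ⟨h1, h2⟩ := h
          · have hp' : ¬ ((p.1 : ℕ) + 3 ≤ n) := by
              intro hh; rw [if_pos hh] at hx; exact hx rfl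
            have hr' : ¬ ((r.1 : ℕ) + 3 ≤ n) := by
              intro hh; rw [if_pos hh] at hy; exact hy rfl
            have hpn := p.1.isLt
            have hrn := r.1.isLt
            refine congrArg Sum.inl (Prod.ext (Fin.ext ?_) h2)
            split_ifs at h1 <;> first | omega | exact absurd h1 (by decide)
          · exfalso; split_ifs at h1 <;> exact absurd h1 (by decide)
          · exfalso; split_ifs at h1 <;> exact absurd h1 (by decide)
          · have hp' : ¬ (2 ≤ (p.1 : ℕ)) := by
              intro hh; rw [if_pos hh] at hx; exact hx rfl
            have hr' : ¬ (2 ≤ (r.1 : ℕ)) := by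
              intro hh; rw [if_pos hh] at hy; exact hy rfl
            refine congrArg Sum.inr (Prod.ext (Fin.ext ?_) h2)
            split_ifs at h1 <;> first | omega | exact absurd h1 (by decide)
        have := Fintype.card_le_of_injective _ hinj
        simp only [Fintype.card_prod, Fintype.card_fin] at this
        omega
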